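/- arXiv:1905.04937 — 2 statements merged into one kernel-verified Lean document; each statement's English description precedes it below -/
import Mathlib

section
/- Define F(Q)(x,u) = L(x,u) + γ · min_{v ∈ U}( E_p[Q(f(x,u,p),v)] + α · Var_p[Q(f(x,u,p),v)] ) on the set B of bounded functions Q : X × U → ℝ with B-bounded excursions, i.e. |Q(f(x,u,p),v) − E_p[Q(f(x,u,p),·),v)]| ≤ B for all (x,u,v,p). Then for Q₁, Q₂ ∈ B, ‖F(Q₁) − F(Q₂)‖_∞ ≤ γ(1 + 4αB)‖Q₁ − Q₂‖_∞. Consequently, if α < (1 − γ)/(4γB) and B is closed under F, the value iteration Q^{(i+1)} = F(Q^{(i)}) converges. -/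
/-!
Write `J(g) = E[g] + α Var[g]` for the penalized cost of a random variable `g`. If `g₁, g₂`
differ by at most `M` everywhere, their means differ by at most `M`, so their centered versions
differ by at most `2M`; both centered versions being bounded by `B`, the identity
`a² - b² = (a + b)(a - b)` bounds the difference of the variances by `2B · 2M`. Hence `J` is
`(1 + 4αB)`-Lipschitz in the sup norm on variables with `B`-bounded excursions; taking a minimum
over finitely many actions and multiplying by `γ` preserves this, which gives the contraction
estimate. When `γ(1 + 4αB) < 1`, successive iterates are geometrically close in the sup norm, so
they converge uniformly.
-/

open MeasureTheory Filter

/-- The stochastic Bellman operator with variance penalty `α`: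
`F(Q)(x,u) = L(x,u) + γ min_v ( E_p[Q(f(x,u,p),v)] + α Var_p[Q(f(x,u,p),v)] )`. -/
noncomputable def bellmanVar {X U P : Type*} [Fintype U] [Nonempty U]
    [MeasurableSpace P] (μ : Measure P)
    (f : X → U → P → X) (L : X → U → ℝ) (γ α : ℝ) (Q : X → U → ℝ) : X → U → ℝ :=
  fun x u => L x u + γ * ⨅ v : U,
    ((∫ p, Q (f x u p) v ∂μ) +
      α * ∫ p, (Q (f x u p) v - ∫ q, Q (f x u q) v ∂μ) ^ 2 ∂μ)

/-- Membership in the class `𝔅` of bounded `Q` functions that are integrable along the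
dynamics and have `B`-bounded excursions. -/
def goodQ {X U P : Type*} [MeasurableSpace P] (μ : Measure P)
    (f : X → U → P → X) (B : ℝ) (Q : X → U → ℝ) : Prop :=
  (∃ C, ∀ x u, |Q x u| ≤ C) ∧
  (∀ x u v, Integrable (fun p => Q (f x u p) v) μ) ∧
  (∀ x u v p, |Q (f x u p) v - ∫ q, Q (f x u q) v ∂μ| ≤ B)

noncomputable def meanVarianceCost {P : Type*} [MeasurableSpace P] (μ : Measure P) (α : ℝ)
    (g : P → ℝ) : ℝ :=
  (∫ p, g p ∂μ) + α * ∫ p, (g p - ∫ q, g q ∂μ) ^ 2 ∂μ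

lemma abs_sq_sub_sq_le {a b B D : ℝ} (ha : |a| ≤ B) (hb : |b| ≤ B) (hab : |a - b| ≤ D) :
    |a ^ 2 - b ^ 2| ≤ 2 * B * D := by
  have hsum : |a + b| ≤ 2 * B := (abs_add_le a b).trans (by linarith)
  calc |a ^ 2 - b ^ 2| = |a + b| * |a - b| := by rw [← abs_mul]; ring_nf
    _ ≤ 2 * B * D := mul_le_mul hsum hab (abs_nonneg _) ((abs_nonneg _).trans hsum)

lemma ciInf_le_ciInf_add_of_finite {ι : Type*} [Finite ι] [Nonempty ι] {F G : ι → ℝ} {c : ℝ}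
    (h : ∀ i, F i ≤ G i + c) : ⨅ i, F i ≤ (⨅ i, G i) + c := by
  have : (⨅ i, F i) - c ≤ ⨅ i, G i :=
    le_ciInf fun i => by linarith [ciInf_le (Finite.bddBelow_range F) i, h i]
  linarith

lemma abs_ciInf_sub_ciInf_le_of_finite {ι : Type*} [Finite ι] [Nonempty ι] {F G : ι → ℝ}
    {c : ℝ} (h : ∀ i, |F i - G i| ≤ c) : |(⨅ i, F i) - ⨅ i, G i| ≤ c := by
  have h₁ : ⨅ i, F i ≤ (⨅ i, G i) + c :=
    ciInf_le_ciInf_add_of_finite fun i => by linarith [(abs_le.mp (h i)).2]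
  have h₂ : ⨅ i, G i ≤ (⨅ i, F i) + c :=
    ciInf_le_ciInf_add_of_finite fun i => by linarith [(abs_le.mp (h i)).1]
  exact abs_le.mpr ⟨by linarith, by linarith⟩

section Probability

variable {P : Type*} [MeasurableSpace P] {μ : Measure P} [IsProbabilityMeasure μ]

lemma abs_integral_sub_integral_le {g₁ g₂ : P → ℝ} {M : ℝ} (h₁ : Integrable g₁ μ)
    (h₂ : Integrable g₂ μ) (h : ∀ p, |g₁ p - g₂ p| ≤ M) :
    |(∫ p, g₁ p ∂μ) - ∫ p, g₂ p ∂μ| ≤ M := by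
  rw [← integral_sub h₁ h₂, ← Real.norm_eq_abs]
  simpa using norm_integral_le_of_norm_le_const (μ := μ)
    (.of_forall fun p => (Real.norm_eq_abs _).trans_le (h p))

lemma integrable_sub_integral_sq {g : P → ℝ} {B : ℝ} (hg : Integrable g μ)
    (hB : ∀ p, |g p - ∫ q, g q ∂μ| ≤ B) :
    Integrable (fun p => (g p - ∫ q, g q ∂μ) ^ 2) μ := by
  refine .of_bound ((hg.sub (integrable_const _)).aestronglyMeasurable.pow 2) (B ^ 2)
    (.of_forall fun p => ?_)
  rw [Real.norm_eq_abs, abs_pow]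
  exact pow_le_pow_left₀ (abs_nonneg _) (hB p) 2

lemma abs_meanVarianceCost_sub_le {g₁ g₂ : P → ℝ} {α B M : ℝ} (hα : 0 ≤ α)
    (h₁ : Integrable g₁ μ) (h₂ : Integrable g₂ μ)
    (hB₁ : ∀ p, |g₁ p - ∫ q, g₁ q ∂μ| ≤ B) (hB₂ : ∀ p, |g₂ p - ∫ q, g₂ q ∂μ| ≤ B)
    (hM : ∀ p, |g₁ p - g₂ p| ≤ M) :
    |meanVarianceCost μ α g₁ - meanVarianceCost μ α g₂| ≤ (1 + 4 * α * B) * M := by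
  set m₁ := ∫ q, g₁ q ∂μ
  set m₂ := ∫ q, g₂ q ∂μ
  have hmean : |m₁ - m₂| ≤ M := abs_integral_sub_integral_le h₁ h₂ hM
  have hcentered (p : P) : |(g₁ p - m₁) - (g₂ p - m₂)| ≤ 2 * M :=
    calc |(g₁ p - m₁) - (g₂ p - m₂)| = |(g₁ p - g₂ p) - (m₁ - m₂)| := by ring_nf
      _ ≤ |g₁ p - g₂ p| + |m₁ - m₂| := abs_sub _ _
      _ ≤ 2 * M := by linarith [hM p]
  have hvar : |(∫ p, (g₁ p - m₁) ^ 2 ∂μ) - ∫ p, (g₂ p - m₂) ^ 2 ∂μ| ≤ 4 * B * M :=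
    abs_integral_sub_integral_le (integrable_sub_integral_sq h₁ hB₁)
      (integrable_sub_integral_sq h₂ hB₂) fun p =>
        (abs_sq_sub_sq_le (hB₁ p) (hB₂ p) (hcentered p)).trans_eq (by ring)
  calc |meanVarianceCost μ α g₁ - meanVarianceCost μ α g₂|
      = |(m₁ - m₂) + α * ((∫ p, (g₁ p - m₁) ^ 2 ∂μ) - ∫ p, (g₂ p - m₂) ^ 2 ∂μ)| := by
        show |(m₁ + α * _) - (m₂ + α * _)| = _; congr 1; ring
    _ ≤ |m₁ - m₂| + α * |(∫ p, (g₁ p - m₁) ^ 2 ∂μ) - ∫ p, (g₂ p - m₂) ^ 2 ∂μ| :=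
        (abs_add_le _ _).trans_eq (by rw [abs_mul, abs_of_nonneg hα])
    _ ≤ M + α * (4 * B * M) := add_le_add hmean (mul_le_mul_of_nonneg_left hvar hα)
    _ = (1 + 4 * α * B) * M := by ring

end Probability

lemma exists_tendsto_iSup_abs_sub_of_le_geometric {Z : Type*} {q : ℕ → Z → ℝ} {C k : ℝ}
    (hC : 0 ≤ C) (hk₀ : 0 ≤ k) (hk₁ : k < 1) (h : ∀ n z, |q n z - q (n + 1) z| ≤ C * k ^ n) :
    ∃ qlim : Z → ℝ, Tendsto (fun n => ⨆ z, |q n z - qlim z|) atTop (nhds 0) := by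
  have hdist (z : Z) (n : ℕ) : dist (q n z) (q (n + 1) z) ≤ C * k ^ n := h n z
  choose qlim hqlim using fun z =>
    cauchySeq_tendsto_of_complete (cauchySeq_of_le_geometric k C hk₁ (hdist z))
  have hbound (n : ℕ) : ⨆ z, |q n z - qlim z| ≤ C * k ^ n / (1 - k) :=
    Real.iSup_le (fun z => dist_le_of_le_geometric_of_tendsto k C hk₁ (hdist z) (hqlim z) n)
      (by have := sub_pos.mpr hk₁; positivity)
  refine ⟨qlim, squeeze_zero (fun n => Real.iSup_nonneg fun z => abs_nonneg _) hbound ?_⟩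
  simpa using ((tendsto_pow_atTop_nhds_zero_of_lt_one hk₀ hk₁).const_mul C).div_const (1 - k)

lemma bddAbove_range_abs_sub {X U : Type*} {Q₁ Q₂ : X → U → ℝ}
    (h₁ : ∃ C, ∀ x u, |Q₁ x u| ≤ C) (h₂ : ∃ C, ∀ x u, |Q₂ x u| ≤ C) :
    BddAbove (Set.range fun z : X × U => |Q₁ z.1 z.2 - Q₂ z.1 z.2|) := by
  obtain ⟨C₁, hC₁⟩ := h₁
  obtain ⟨C₂, hC₂⟩ := h₂
  refine ⟨C₁ + C₂, ?_⟩
  rintro _ ⟨z, rfl⟩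
  exact (abs_sub _ _).trans (add_le_add (hC₁ _ _) (hC₂ _ _))

section Bellman

variable {X U P : Type*} [Fintype U] [Nonempty U] [MeasurableSpace P] {μ : Measure P}
  {f : X → U → P → X} {L : X → U → ℝ} {γ α B : ℝ} {Q₁ Q₂ : X → U → ℝ}

lemma bellmanVar_apply (Q : X → U → ℝ) (x : X) (u : U) :
    bellmanVar μ f L γ α Q x u =
      L x u + γ * ⨅ v, meanVarianceCost μ α fun p => Q (f x u p) v :=
  rfl

lemma abs_bellmanVar_sub_le [IsProbabilityMeasure μ] (hγ : 0 ≤ γ) (hα : 0 ≤ α)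
    (hQ₁ : goodQ μ f B Q₁) (hQ₂ : goodQ μ f B Q₂) {M : ℝ} (hM : ∀ x u, |Q₁ x u - Q₂ x u| ≤ M)
    (x : X) (u : U) :
    |bellmanVar μ f L γ α Q₁ x u - bellmanVar μ f L γ α Q₂ x u| ≤ γ * (1 + 4 * α * B) * M := by
  have hmin : |(⨅ v, meanVarianceCost μ α fun p => Q₁ (f x u p) v) -
      ⨅ v, meanVarianceCost μ α fun p => Q₂ (f x u p) v| ≤ (1 + 4 * α * B) * M :=
    abs_ciInf_sub_ciInf_le_of_finite fun v => abs_meanVarianceCost_sub_le hα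
      (hQ₁.2.1 x u v) (hQ₂.2.1 x u v) (hQ₁.2.2 x u v) (hQ₂.2.2 x u v) fun p => hM _ _
  calc |bellmanVar μ f L γ α Q₁ x u - bellmanVar μ f L γ α Q₂ x u|
      = γ * |(⨅ v, meanVarianceCost μ α fun p => Q₁ (f x u p) v) -
          ⨅ v, meanVarianceCost μ α fun p => Q₂ (f x u p) v| := by
        rw [bellmanVar_apply, bellmanVar_apply, add_sub_add_left_eq_sub, ← mul_sub, abs_mul,
          abs_of_nonneg hγ]
    _ ≤ γ * (1 + 4 * α * B) * M := by rw [mul_assoc]; exact mul_le_mul_of_nonneg_left hmin hγ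

lemma iSup_abs_bellmanVar_sub_le [IsProbabilityMeasure μ] (hγ : 0 ≤ γ) (hα : 0 ≤ α)
    (hB : 0 ≤ B) (hQ₁ : goodQ μ f B Q₁) (hQ₂ : goodQ μ f B Q₂) :
    (⨆ z : X × U, |bellmanVar μ f L γ α Q₁ z.1 z.2 - bellmanVar μ f L γ α Q₂ z.1 z.2|)
      ≤ γ * (1 + 4 * α * B) * ⨆ z : X × U, |Q₁ z.1 z.2 - Q₂ z.1 z.2| :=
  Real.iSup_le (fun z => abs_bellmanVar_sub_le hγ hα hQ₁ hQ₂
      (fun x u => le_ciSup (bddAbove_range_abs_sub hQ₁.1 hQ₂.1) (x, u)) z.1 z.2)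
    (by have := Real.iSup_nonneg fun z : X × U => abs_nonneg (Q₁ z.1 z.2 - Q₂ z.1 z.2)
        positivity)

end Bellman

theorem stmt_7_general {X U P : Type*} [Fintype U] [Nonempty U]
    [MeasurableSpace P] (μ : Measure P) [IsProbabilityMeasure μ]
    (f : X → U → P → X) (L : X → U → ℝ)
    (γ α B : ℝ) (hγ : γ ∈ Set.Ioo (0 : ℝ) 1) (hα : 0 ≤ α) (hB : 0 < B) :
    (∀ Q₁ Q₂ : X → U → ℝ, goodQ μ f B Q₁ → goodQ μ f B Q₂ →
      (⨆ z : X × U, |bellmanVar μ f L γ α Q₁ z.1 z.2 - bellmanVar μ f L γ α Q₂ z.1 z.2|)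
        ≤ γ * (1 + 4 * α * B) * ⨆ z : X × U, |Q₁ z.1 z.2 - Q₂ z.1 z.2|) ∧
    (α < (1 - γ) / (4 * γ * B) →
      ∀ Qseq : ℕ → X → U → ℝ,
        (∀ i, goodQ μ f B (Qseq i)) →
        (∀ i, Qseq (i + 1) = bellmanVar μ f L γ α (Qseq i)) →
        ∃ Qlim : X → U → ℝ,
          Tendsto (fun i => ⨆ z : X × U, |Qseq i z.1 z.2 - Qlim z.1 z.2|)
            atTop (nhds 0)) := by
  obtain ⟨hγ₀, -⟩ := hγ
  have hlip (Q₁ Q₂ : X → U → ℝ) (h₁ : goodQ μ f B Q₁) (h₂ : goodQ μ f B Q₂) :=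
    iSup_abs_bellmanVar_sub_le (L := L) hγ₀.le hα hB.le h₁ h₂
  refine ⟨hlip, fun hαlt Qseq hgood hrec => ?_⟩
  set k := γ * (1 + 4 * α * B)
  have hk₀ : 0 ≤ k := by positivity
  have hk₁ : k < 1 := by
    have := (lt_div_iff₀ (by positivity : 0 < 4 * γ * B)).mp hαlt
    linarith
  set d : ℕ → ℝ := fun n => ⨆ z : X × U, |Qseq n z.1 z.2 - Qseq (n + 1) z.1 z.2|
  have hcontract (n : ℕ) : d (n + 1) ≤ k * d n := by
    have h := hlip _ _ (hgood n) (hgood (n + 1))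
    rwa [← hrec n, ← hrec (n + 1)] at h
  have hgeom (n : ℕ) : d n ≤ k ^ n * d 0 :=
    (monotone_mul_left_of_nonneg hk₀).seq_le_seq (y := fun n => k ^ n * d 0) n (by simp)
      (fun m _ => hcontract m) (fun m _ => le_of_eq (by ring))
  obtain ⟨qlim, hqlim⟩ := exists_tendsto_iSup_abs_sub_of_le_geometric
    (q := fun n (z : X × U) => Qseq n z.1 z.2) (Real.iSup_nonneg fun z => abs_nonneg _) hk₀ hk₁
    fun n z => (le_ciSup (bddAbove_range_abs_sub (hgood n).1 (hgood (n + 1)).1) z).trans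
      ((hgeom n).trans_eq (mul_comm _ _))
  exact ⟨fun x u => qlim (x, u), hqlim⟩

/-- on the class of `B`-bounded-excursion functions the variance-penalized
Bellman operator is `γ(1+4αB)`-Lipschitz in the sup norm; consequently, if
`α < (1-γ)/(4γB)` and the class is closed under `F`, the value iteration converges. -/
theorem stmt_7 {X U P : Type*} [Fintype U] [Nonempty U] [Nonempty X]
    [MeasurableSpace P] (μ : Measure P) [IsProbabilityMeasure μ]
    (f : X → U → P → X) (L : X → U → ℝ) (hL : ∃ C, ∀ x u, |L x u| ≤ C)
    (γ α B : ℝ) (hγ : γ ∈ Set.Ioo (0 : ℝ) 1) (hα : 0 ≤ α) (hB : 0 < B) :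
    (∀ Q₁ Q₂ : X → U → ℝ, goodQ μ f B Q₁ → goodQ μ f B Q₂ →
      (⨆ z : X × U, |bellmanVar μ f L γ α Q₁ z.1 z.2 - bellmanVar μ f L γ α Q₂ z.1 z.2|)
        ≤ γ * (1 + 4 * α * B) * ⨆ z : X × U, |Q₁ z.1 z.2 - Q₂ z.1 z.2|) ∧
    (α < (1 - γ) / (4 * γ * B) →
      ∀ Qseq : ℕ → X → U → ℝ,
        (∀ i, goodQ μ f B (Qseq i)) →
        (∀ i, Qseq (i + 1) = bellmanVar μ f L γ α (Qseq i)) →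
        ∃ Qlim : X → U → ℝ,
          Tendsto (fun i => ⨆ z : X × U, |Qseq i z.1 z.2 - Qlim z.1 z.2|)
            atTop (nhds 0)) :=
  stmt_7_general μ f L γ α B hγ hα hB
end

section
/- Let Q₁, Q₂ be bounded real random variables and define S_α(Q) = E[Q] + α Var(Q) with α ≥ 0. If |Q_i − E Q_i| ≤ B almost surely for i = 1,2, then |S_α(Q₁) − S_α(Q₂)| ≤ (1 + 4αB) ‖Q₁ − Q₂‖_∞. -/
/-!
The mean moves by at most `D := ‖Q₁ - Q₂‖_∞`, so the centred variables differ by at most `2D`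
almost surely. Since both centred variables are bounded by `B`, the difference of their squares,
`(x + y)(x - y)`, is at most `2B · 2D`, and integrating gives `|Var Q₁ - Var Q₂| ≤ 4BD`.
-/

open MeasureTheory

theorem abs_sq_sub_sq_le_s16 {x y B d : ℝ} (hx : |x| ≤ B) (hy : |y| ≤ B) (hxy : |x - y| ≤ d) :
    |x ^ 2 - y ^ 2| ≤ 2 * B * d := by
  have hsum : |x + y| ≤ 2 * B := (abs_add_le x y).trans (by linarith)
  rw [show x ^ 2 - y ^ 2 = (x + y) * (x - y) by ring, abs_mul]
  exact mul_le_mul hsum hxy (abs_nonneg _) (by linarith [abs_nonneg x])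

section Probability

variable {Ω : Type*} [MeasurableSpace Ω] {μ : Measure Ω} {f g : Ω → ℝ}

/-- `essSup` of a real function that is not essentially bounded above is a junk value; the
excursion bounds rule this out. -/
theorem ae_abs_sub_le_essSup_of_ae_abs_sub_integral_le {B : ℝ}
    (hf : ∀ᵐ ω ∂μ, |f ω - ∫ ω', f ω' ∂μ| ≤ B) (hg : ∀ᵐ ω ∂μ, |g ω - ∫ ω', g ω' ∂μ| ≤ B) :
    ∀ᵐ ω ∂μ, |f ω - g ω| ≤ essSup (fun ω => |f ω - g ω|) μ := by
  refine ae_le_essSup ⟨2 * B + |∫ ω, f ω ∂μ - ∫ ω, g ω ∂μ|, Filter.eventually_map.mpr ?_⟩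
  filter_upwards [hf, hg] with ω hfω hgω
  calc |f ω - g ω|
      = |(f ω - ∫ ω', f ω' ∂μ) - (g ω - ∫ ω', g ω' ∂μ) + (∫ ω, f ω ∂μ - ∫ ω, g ω ∂μ)| := by
        ring_nf
    _ ≤ 2 * B + |∫ ω, f ω ∂μ - ∫ ω, g ω ∂μ| := by
        grw [abs_add_le, abs_sub, hfω, hgω]
        linarith

variable [IsProbabilityMeasure μ]

theorem abs_integral_le_of_ae_abs_le {C : ℝ} (h : ∀ᵐ ω ∂μ, |f ω| ≤ C) : |∫ ω, f ω ∂μ| ≤ C := by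
  simpa using norm_integral_le_of_norm_le_const (μ := μ) (f := f) (by simpa only [Real.norm_eq_abs])

theorem abs_integral_sub_integral_le_s16 (hf : Integrable f μ) (hg : Integrable g μ) {C : ℝ}
    (h : ∀ᵐ ω ∂μ, |f ω - g ω| ≤ C) : |∫ ω, f ω ∂μ - ∫ ω, g ω ∂μ| ≤ C := by
  rw [← integral_sub hf hg]
  exact abs_integral_le_of_ae_abs_le h

theorem abs_centered_second_moment_sub_le (hf : MemLp f 2 μ) (hg : MemLp g 2 μ) {B D : ℝ}
    (hfB : ∀ᵐ ω ∂μ, |f ω - ∫ ω', f ω' ∂μ| ≤ B) (hgB : ∀ᵐ ω ∂μ, |g ω - ∫ ω', g ω' ∂μ| ≤ B)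
    (hD : ∀ᵐ ω ∂μ, |f ω - g ω| ≤ D) :
    |∫ ω, (f ω - ∫ ω', f ω' ∂μ) ^ 2 ∂μ - ∫ ω, (g ω - ∫ ω', g ω' ∂μ) ^ 2 ∂μ| ≤ 4 * B * D := by
  set m₁ := ∫ ω, f ω ∂μ
  set m₂ := ∫ ω, g ω ∂μ
  have hmean : |m₁ - m₂| ≤ D :=
    abs_integral_sub_integral_le_s16 (hf.integrable one_le_two) (hg.integrable one_le_two) hD
  refine abs_integral_sub_integral_le_s16 (hf.sub (memLp_const m₁)).integrable_sq
    (hg.sub (memLp_const m₂)).integrable_sq ?_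
  filter_upwards [hfB, hgB, hD] with ω hfω hgω hDω
  have hcentered : |(f ω - m₁) - (g ω - m₂)| ≤ 2 * D := by
    rw [show (f ω - m₁) - (g ω - m₂) = (f ω - g ω) - (m₁ - m₂) by ring]
    exact (abs_sub _ _).trans (by linarith)
  simp only [Pi.sub_apply]
  linarith [abs_sq_sub_sq_le_s16 hfω hgω hcentered]

end Probability

theorem stmt_16_general {Ω : Type*} [MeasurableSpace Ω]
    (μ : Measure Ω) [IsProbabilityMeasure μ]
    (Q₁ Q₂ : Ω → ℝ) (α B : ℝ) (hα : 0 ≤ α)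
    (h₁ : MemLp Q₁ 2 μ) (h₂ : MemLp Q₂ 2 μ)
    (hexc₁ : ∀ᵐ ω ∂μ, |Q₁ ω - ∫ ω', Q₁ ω' ∂μ| ≤ B)
    (hexc₂ : ∀ᵐ ω ∂μ, |Q₂ ω - ∫ ω', Q₂ ω' ∂μ| ≤ B) :
    |((∫ ω, Q₁ ω ∂μ) + α * ∫ ω, (Q₁ ω - ∫ ω', Q₁ ω' ∂μ) ^ 2 ∂μ)
        - ((∫ ω, Q₂ ω ∂μ) + α * ∫ ω, (Q₂ ω - ∫ ω', Q₂ ω' ∂μ) ^ 2 ∂μ)|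
      ≤ (1 + 4 * α * B) * essSup (fun ω => |Q₁ ω - Q₂ ω|) μ := by
  set D := essSup (fun ω => |Q₁ ω - Q₂ ω|) μ
  have hD := ae_abs_sub_le_essSup_of_ae_abs_sub_integral_le hexc₁ hexc₂
  have hmean :=
    abs_integral_sub_integral_le_s16 (h₁.integrable one_le_two) (h₂.integrable one_le_two) hD
  have hvar := abs_centered_second_moment_sub_le h₁ h₂ hexc₁ hexc₂ hD
  calc _ = |(∫ ω, Q₁ ω ∂μ - ∫ ω, Q₂ ω ∂μ) + α * (∫ ω, (Q₁ ω - ∫ ω', Q₁ ω' ∂μ) ^ 2 ∂μ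
          - ∫ ω, (Q₂ ω - ∫ ω', Q₂ ω' ∂μ) ^ 2 ∂μ)| := by ring_nf
    _ ≤ D + α * (4 * B * D) := by
        grw [abs_add_le, abs_mul, abs_of_nonneg hα, hmean, hvar]
    _ = (1 + 4 * α * B) * D := by ring

/-- the mean-plus-variance risk functional `S_α(Q) = E[Q] + α Var(Q)` is
`(1 + 4αB)`-Lipschitz in the essential sup norm on `B`-bounded-excursion random variables. -/
theorem stmt_16 {Ω : Type*} [MeasurableSpace Ω]
    (μ : Measure Ω) [IsProbabilityMeasure μ]
    (Q₁ Q₂ : Ω → ℝ) (α B : ℝ) (hα : 0 ≤ α) (hB : 0 < B)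
    (h₁ : MemLp Q₁ 2 μ) (h₂ : MemLp Q₂ 2 μ)
    (hb₁ : ∃ C, ∀ ω, |Q₁ ω| ≤ C) (hb₂ : ∃ C, ∀ ω, |Q₂ ω| ≤ C)
    (hexc₁ : ∀ᵐ ω ∂μ, |Q₁ ω - ∫ ω', Q₁ ω' ∂μ| ≤ B)
    (hexc₂ : ∀ᵐ ω ∂μ, |Q₂ ω - ∫ ω', Q₂ ω' ∂μ| ≤ B) :
    |((∫ ω, Q₁ ω ∂μ) + α * ∫ ω, (Q₁ ω - ∫ ω', Q₁ ω' ∂μ) ^ 2 ∂μ)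
        - ((∫ ω, Q₂ ω ∂μ) + α * ∫ ω, (Q₂ ω - ∫ ω', Q₂ ω' ∂μ) ^ 2 ∂μ)|
      ≤ (1 + 4 * α * B) * essSup (fun ω => |Q₁ ω - Q₂ ω|) μ :=
  stmt_16_general μ Q₁ Q₂ α B hα h₁ h₂ hexc₁ hexc₂
end
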